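/- arXiv:1404.6032 — 3 statements merged into one kernel-verified Lean document; each statement's English description precedes it below -/
import Mathlib

section
/- Let d = k+1 with k ≥ 1, and let p_1,…,p_k be free polynomials in d variables. Suppose X_0 ∈ M_n and Y_0 = (Y_0^1,…,Y_0^k) ∈ M_n^k satisfy p_j(X_0, Y_0^1,…,Y_0^k) = 0 for all j, and suppose that the linear map M_n^k → M_n^k sending h = (h^1,…,h^k) to (Dp_j(X_0,Y_0)[(0, h^1,…,h^k)])_{j=1}^k is bijective. Then every Y_0^j commutes with X_0. -/
open Matrix Filter Topology
open scoped Matrix.Norms.L2Operator Kronecker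

noncomputable section

/-- `n × n` complex matrices, with the `L²` operator norm. -/
abbrev Mat (n : ℕ) : Type := Matrix (Fin n) (Fin n) ℂ

/-- `d`-tuples of `n × n` complex matrices, normed by the max of the operator norms. -/
abbrev MatTup (d n : ℕ) : Type := Fin d → Mat n

/-- `M^d`, the disjoint union over all `n` of the `d`-tuples of `n × n` matrices. -/
abbrev MSpace (d : ℕ) : Type := Σ n : ℕ, MatTup d n

/-- Free (noncommutative) polynomials in `d` variables over `ℂ`. -/
abbrev FreePoly (d : ℕ) : Type := FreeAlgebra ℂ (Fin d)

/-- Evaluation of a free polynomial at a `d`-tuple of matrices. -/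
def polyEval {d n : ℕ} (p : FreePoly d) (x : MatTup d n) : Mat n :=
  FreeAlgebra.lift ℂ (fun i => x i) p

/-- The (Fréchet) derivative of the evaluation of a free polynomial, `Dp(a)[h]`. -/
def polyDeriv {d n : ℕ} (p : FreePoly d) (a h : MatTup d n) : Mat n :=
  fderiv ℂ (fun x : MatTup d n => polyEval p x) a h

/-- Assemble a `2 × 2` block matrix.  -/
def blk {n m : ℕ} (A : Matrix (Fin n) (Fin n) ℂ) (B : Matrix (Fin n) (Fin m) ℂ)
    (C : Matrix (Fin m) (Fin n) ℂ) (D : Matrix (Fin m) (Fin m) ℂ) : Mat (n + m) :=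
  Matrix.reindex finSumFinEquiv finSumFinEquiv (Matrix.fromBlocks A B C D)

/-- Coordinatewise direct sum of tuples of matrices. -/
def dSum {d n m : ℕ} (x : MatTup d n) (y : MatTup d m) : MatTup d (n + m) :=
  fun r => blk (x r) 0 0 (y r)

/-- Coordinatewise conjugation `s⁻¹ x s`. -/
def simConj {d n : ℕ} (s : Mat n) (x : MatTup d n) : MatTup d n :=
  fun r => s⁻¹ * x r * s

/-- An nc domain: a d.u. open subset of `M^d` closed under direct sums and unitary
conjugations. -/
structure IsNCDomain {d : ℕ} (Ω : Set (MSpace d)) : Prop where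
  duOpen : ∀ n : ℕ, IsOpen {x : MatTup d n | (⟨n, x⟩ : MSpace d) ∈ Ω}
  dsum_mem : ∀ {n m : ℕ} (x : MatTup d n) (y : MatTup d m),
    (⟨n, x⟩ : MSpace d) ∈ Ω → (⟨m, y⟩ : MSpace d) ∈ Ω →
    (⟨n + m, dSum x y⟩ : MSpace d) ∈ Ω
  unitary_mem : ∀ {n : ℕ} (u : Matrix.unitaryGroup (Fin n) ℂ) (x : MatTup d n),
    (⟨n, x⟩ : MSpace d) ∈ Ω → (⟨n, simConj (u : Mat n) x⟩ : MSpace d) ∈ Ω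

/-- A d.u. open subset of `M^d`: each slice is open. -/
def DUOpen {d : ℕ} (U : Set (MSpace d)) : Prop :=
  ∀ n : ℕ, IsOpen {x : MatTup d n | (⟨n, x⟩ : MSpace d) ∈ U}

/-- An nc function on `Ω`: a graded function respecting direct sums and similarities. -/
structure IsNCFunctionOn {d : ℕ} (Ω : Set (MSpace d)) (f : ∀ n, MatTup d n → Mat n) : Prop where
  dsum_eq : ∀ {n m : ℕ} (x : MatTup d n) (y : MatTup d m),
    (⟨n, x⟩ : MSpace d) ∈ Ω → (⟨m, y⟩ : MSpace d) ∈ Ω →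
    (⟨n + m, dSum x y⟩ : MSpace d) ∈ Ω →
    f (n + m) (dSum x y) = blk (f n x) 0 0 (f m y)
  sim_eq : ∀ {n : ℕ} (s : Mat n) (x : MatTup d n), IsUnit s →
    (⟨n, x⟩ : MSpace d) ∈ Ω → (⟨n, simConj s x⟩ : MSpace d) ∈ Ω →
    f n (simConj s x) = s⁻¹ * f n x * s

/-- A fine open set: a union of nc domains. -/
def FineOpen {d : ℕ} (U : Set (MSpace d)) : Prop :=
  ∀ x ∈ U, ∃ Ω : Set (MSpace d), IsNCDomain Ω ∧ x ∈ Ω ∧ Ω ⊆ U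

/-- A fine holomorphic function: an nc function on a fine open set, locally bounded in
the fine topology. -/
def IsFineHolo {d : ℕ} (U : Set (MSpace d)) (f : ∀ n, MatTup d n → Mat n) : Prop :=
  FineOpen U ∧ IsNCFunctionOn U f ∧
    ∀ a ∈ U, ∃ Ω : Set (MSpace d), IsNCDomain Ω ∧ a ∈ Ω ∧ Ω ⊆ U ∧
      ∃ C : ℝ, ∀ x ∈ Ω, ‖f x.1 x.2‖ ≤ C

/-- `a^{(k)}`, the direct sum of `k` copies of `a`. -/
def ampTup {d n : ℕ} (k : ℕ) (a : MatTup d n) : MatTup d (k * n) :=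
  fun r => Matrix.reindex finProdFinEquiv finProdFinEquiv
    ((1 : Matrix (Fin k) (Fin k) ℂ) ⊗ₖ a r)

/-- The basic fat neighborhood `F(a,r)`: all unitary conjugates of points within `r`
of some `a^{(k)}`. -/
def FBall {d : ℕ} (a : MSpace d) (r : ℝ) : Set (MSpace d) :=
  {y | ∃ k : ℕ, 1 ≤ k ∧ ∃ x : MatTup d (k * a.1), ‖x - ampTup k a.2‖ < r ∧
    ∃ u : Matrix.unitaryGroup (Fin (k * a.1)) ℂ,
      y = ⟨k * a.1, simConj (u : Mat (k * a.1)) x⟩}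

/-- A fat open set. -/
def FatOpen {d : ℕ} (U : Set (MSpace d)) : Prop :=
  ∀ y ∈ U, ∃ ε : ℝ, 0 < ε ∧ FBall y ε ⊆ U

/-- A fat holomorphic function: an nc function on a fat open set, locally bounded in the
fat topology. -/
def IsFatHolo {d : ℕ} (U : Set (MSpace d)) (f : ∀ n, MatTup d n → Mat n) : Prop :=
  FatOpen U ∧ IsNCFunctionOn U f ∧
    ∀ a ∈ U, ∃ ε : ℝ, 0 < ε ∧ FBall a ε ⊆ U ∧
      ∃ C : ℝ, ∀ x ∈ FBall a ε, ‖f x.1 x.2‖ ≤ C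

/-- The Hessian `Hf(a)[h,k]`: the derivative in direction `k` of `x ↦ Df(x)[h]`. -/
def ncHess {d n : ℕ} (f : ∀ m, MatTup d m → Mat m) (a h k : MatTup d n) : Mat n :=
  fderiv ℂ (fun x : MatTup d n => fderiv ℂ (f n) x h) a k

/-- Join a `(d-k)`-tuple and a `k`-tuple into a `d`-tuple. -/
def joinTup {d k : ℕ} (hk : k ≤ d) {n : ℕ} (y : Fin (d - k) → Mat n) (z : Fin k → Mat n) :
    Fin d → Mat n :=
  fun j => if hj : (j : ℕ) < d - k then y ⟨j, hj⟩
    else z ⟨(j : ℕ) - (d - k), by have := j.isLt; omega⟩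

/-- A tuple `a` is broad if every matrix is a polynomial in `a`. -/
def Broad {d n : ℕ} (a : MatTup d n) : Prop :=
  ∀ M : Mat n, ∃ p : FreePoly d, polyEval p a = M

/-- The ampliation `id_k ⊗ L` of a map `L : M_n^d → M_n`, acting blockwise on
`M_{kn}^d` (identifying `M_{kn}` with `k × k` block matrices over `M_n`). -/
def ampFun {d n : ℕ} (L : MatTup d n → Mat n) (k : ℕ) (H : MatTup d (k * n)) : Mat (k * n) :=
  fun p q =>
    L (fun r s t => H r (finProdFinEquiv ((finProdFinEquiv.symm p).1, s))
        (finProdFinEquiv ((finProdFinEquiv.symm q).1, t)))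
      (finProdFinEquiv.symm p).2 (finProdFinEquiv.symm q).2

/-- The set of operator norms of right inverses of the ampliation `L_k`. -/
def RightInvVals {d n : ℕ} (L : MatTup d n → Mat n) (k : ℕ) : Set ℝ :=
  {c | ∃ S : Mat (k * n) →L[ℂ] MatTup d (k * n), (∀ Y, ampFun L k (S Y) = Y) ∧ ‖S‖ = c}

/-- `L` is completely nonsingular: every ampliation has a right inverse, and
`sup_k inf {‖R‖ : R right inverse of L_k} < ∞`. -/
def CompletelyNonsingular {d n : ℕ} (L : MatTup d n → Mat n) : Prop :=
  (∀ k : ℕ, 1 ≤ k → (RightInvVals L k).Nonempty) ∧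
    BddAbove {c : ℝ | ∃ k : ℕ, 1 ≤ k ∧ c = sInf (RightInvVals L k)}

/-- `c(L) = (sup_k inf {‖R‖ : R right inverse of L_k})⁻¹`. -/
def cConst {d n : ℕ} (L : MatTup d n → Mat n) : ℝ :=
  (sSup {c : ℝ | ∃ k : ℕ, 1 ≤ k ∧ c = sInf (RightInvVals L k)})⁻¹

/-- Evaluation of a `J × J` matrix of free polynomials at `x ∈ M_n^d`, as an
`Jn × Jn` matrix. -/
def matPolyEval {d J n : ℕ} (δ : Matrix (Fin J) (Fin J) (FreePoly d)) (x : MatTup d n) :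
    Matrix (Fin (J * n)) (Fin (J * n)) ℂ :=
  fun p q => polyEval (δ (finProdFinEquiv.symm p).1 (finProdFinEquiv.symm q).1) x
    (finProdFinEquiv.symm p).2 (finProdFinEquiv.symm q).2

/-- The basic free open set `G_δ = {x : ‖δ(x)‖ < 1}`. -/
def GSet {d J : ℕ} (δ : Matrix (Fin J) (Fin J) (FreePoly d)) : Set (MSpace d) :=
  {x | ‖matPolyEval δ x.2‖ < 1}

/-- The linear map `Γ ↦ aΓ - Γa` from `M_n` to `M_n^d`. -/
def commMap {d n : ℕ} (a : MatTup d n) : Mat n →ₗ[ℂ] MatTup d n where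
  toFun := fun Γ => fun r => a r * Γ - Γ * a r
  map_add' := by
    intro Γ₁ Γ₂
    funext r
    simp only [Matrix.mul_add, Matrix.add_mul, Pi.add_apply]
    abel
  map_smul' := by
    intro c Γ
    funext r
    simp [Matrix.mul_smul, Matrix.smul_mul, smul_sub]

/-- The subspace `{aΓ - Γa : Γ ∈ M_n}` of `M_n^d`. -/
def commSubspace {d n : ℕ} (a : MatTup d n) : Submodule ℂ (MatTup d n) :=
  LinearMap.range (commMap a)

end

/-!
Differentiating a free polynomial in the direction `aΓ - Γa` of an infinitesimal similarity
gives the commutator `p(a)Γ - Γp(a)`: the product rule makes both sides derivations in `p`, and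
they agree on the generators. At `a = (X₀, Y₀)` with `Γ = X₀` this direction is
`(0, Y₀X₀ - X₀Y₀)`, and the commutator vanishes since every `p_j(a) = 0`; injectivity of the
partial derivative in the `Y`-variables then forces `Y₀X₀ = X₀Y₀`.
-/

section PolyDeriv

variable {d n : ℕ}

theorem polyEval_algebraMap (c : ℂ) (x : MatTup d n) :
    polyEval (algebraMap ℂ (FreePoly d) c) x = algebraMap ℂ (Mat n) c :=
  AlgHom.commutes _ c

theorem polyEval_ι (i : Fin d) (x : MatTup d n) : polyEval (FreeAlgebra.ι ℂ i) x = x i :=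
  FreeAlgebra.lift_ι_apply _ i

theorem polyEval_add (p q : FreePoly d) (x : MatTup d n) :
    polyEval (p + q) x = polyEval p x + polyEval q x :=
  map_add _ p q

theorem polyEval_mul (p q : FreePoly d) (x : MatTup d n) :
    polyEval (p * q) x = polyEval p x * polyEval q x :=
  map_mul _ p q

theorem differentiable_polyEval (p : FreePoly d) :
    Differentiable ℂ fun x : MatTup d n => polyEval p x := by
  induction p using FreeAlgebra.induction with
  | grade0 c => simp only [polyEval_algebraMap]; fun_prop
  | grade1 i => simp only [polyEval_ι]; fun_prop
  | add p q hp hq => simp only [polyEval_add]; exact hp.add hq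
  | mul p q hp hq => simp only [polyEval_mul]; exact hp.mul hq

theorem polyDeriv_algebraMap (c : ℂ) (a h : MatTup d n) :
    polyDeriv (algebraMap ℂ (FreePoly d) c) a h = 0 := by
  simp only [polyDeriv, polyEval_algebraMap]
  rw [fderiv_const_apply]
  rfl

theorem polyDeriv_ι (i : Fin d) (a h : MatTup d n) :
    polyDeriv (FreeAlgebra.ι ℂ i) a h = h i := by
  simp only [polyDeriv, polyEval_ι]
  rw [fderiv_apply differentiableAt_id]
  simp

theorem polyDeriv_add (p q : FreePoly d) (a h : MatTup d n) :
    polyDeriv (p + q) a h = polyDeriv p a h + polyDeriv q a h := by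
  simp only [polyDeriv, polyEval_add]
  rw [fderiv_fun_add (differentiable_polyEval p a) (differentiable_polyEval q a)]
  rfl

theorem polyDeriv_mul (p q : FreePoly d) (a h : MatTup d n) :
    polyDeriv (p * q) a h = polyEval p a * polyDeriv q a h + polyDeriv p a h * polyEval q a := by
  simp only [polyDeriv, polyEval_mul]
  rw [fderiv_fun_mul' (differentiable_polyEval p a) (differentiable_polyEval q a)]
  rfl

theorem polyDeriv_commMap (p : FreePoly d) (a : MatTup d n) (Γ : Mat n) :
    polyDeriv p a (commMap a Γ) = polyEval p a * Γ - Γ * polyEval p a := by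
  induction p using FreeAlgebra.induction with
  | grade0 c => rw [polyDeriv_algebraMap, polyEval_algebraMap, Algebra.commutes, sub_self]
  | grade1 i => simp only [polyDeriv_ι, polyEval_ι]; rfl
  | add p q hp hq => rw [polyDeriv_add, polyEval_add, hp, hq]; noncomm_ring
  | mul p q hp hq => rw [polyDeriv_mul, polyEval_mul, hp, hq]; noncomm_ring

end PolyDeriv

theorem commMap_cons_self {k n : ℕ} (X : Mat n) (Y : Fin k → Mat n) :
    commMap (Fin.cons X Y : MatTup (k + 1) n) X = Fin.cons 0 fun j => Y j * X - X * Y j := by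
  funext r
  refine Fin.cases ?_ (fun j => ?_) r <;> simp [commMap]

theorem codim_one_zero_sets_commute_general (k : ℕ) (n : ℕ)
    (p : Fin k → FreePoly (k + 1)) (X₀ : Mat n) (Y₀ : Fin k → Mat n)
    (hzero : ∀ j, polyEval (p j) (Fin.cons X₀ Y₀) = 0)
    (hbij : Function.Bijective fun h : Fin k → Mat n =>
      (fun j => polyDeriv (p j) (Fin.cons X₀ Y₀) (Fin.cons 0 h) : Fin k → Mat n)) :
    ∀ j, Commute X₀ (Y₀ j) := by
  have hker : (fun j => Y₀ j * X₀ - X₀ * Y₀ j) = 0 := by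
    have hcons : (Fin.cons 0 0 : MatTup (k + 1) n) = 0 := funext (Fin.cases rfl fun _ => rfl)
    apply hbij.injective
    funext j
    dsimp only
    rw [← commMap_cons_self, polyDeriv_commMap, hzero, hcons, polyDeriv, map_zero]
    simp
  exact fun j => (sub_eq_zero.mp (congrFun hker j)).symm

/-- If `p₁,…,p_k` are free polynomials in `k+1` variables, `(X₀, Y₀)` is a common zero,
and the map `h ↦ (Dp_j(X₀,Y₀)[(0,h)])_j` on `M_n^k` is bijective, then each `Y₀ⱼ`
commutes with `X₀`. -/
theorem codim_one_zero_sets_commute (k : ℕ) (hk : 1 ≤ k) (n : ℕ)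
    (p : Fin k → FreePoly (k + 1)) (X₀ : Mat n) (Y₀ : Fin k → Mat n)
    (hzero : ∀ j, polyEval (p j) (Fin.cons X₀ Y₀) = 0)
    (hbij : Function.Bijective fun h : Fin k → Mat n =>
      (fun j => polyDeriv (p j) (Fin.cons X₀ Y₀) (Fin.cons 0 h) : Fin k → Mat n)) :
    ∀ j, Commute X₀ (Y₀ j) :=
  codim_one_zero_sets_commute_general k n p X₀ Y₀ hzero hbij
end

section
/- Let a,b,c ∈ ℂ with b + c ≠ 0, let X_0 ∈ M_n be invertible, and set 𝒴 = {Y ∈ M_n : aX_0² + bX_0Y + cYX_0 = 0}. Then: (i) −(a/(b+c))X_0 is the unique element of 𝒴 that commutes with X_0, and 𝒴 = {−(a/(b+c))X_0 + H : H ∈ M_n, bX_0H + cHX_0 = 0}; (ii) if the spectra σ(bX_0) and σ(−cX_0) are disjoint, then 𝒴 = {−(a/(b+c))X_0}. -/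
open Matrix Filter Topology
open scoped Matrix.Norms.L2Operator Kronecker

/-!
The equation is affine in `Y`: two solutions differ by a solution `H` of the homogeneous
Sylvester equation `(b X₀) H = H (-c X₀)`, and `-(a/(b+c)) X₀` is a solution. A solution `Z`
commuting with `X₀` satisfies `X₀ (a X₀ + (b + c) Z) = 0`, which pins it down since `X₀` is
invertible. When `σ(b X₀)` and `σ(-c X₀)` are disjoint, `χ_{bX₀}(-c X₀)` is invertible by the
spectral mapping theorem, and Cayley–Hamilton then kills every `H`.
-/

open Polynomial in
theorem SemiconjBy.aeval {R A : Type*} [CommSemiring R] [Semiring A] [Algebra R A] {h x y : A}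
    (hxy : SemiconjBy h x y) (p : R[X]) : SemiconjBy h (aeval x p) (aeval y p) := by
  induction p using Polynomial.induction_on' with
  | add p q hp hq => simpa only [map_add] using hp.add_right hq
  | monomial k r =>
    simp only [aeval_monomial]
    exact SemiconjBy.mul_right (Algebra.commute_algebraMap_right r h) (hxy.pow_right k)

open Polynomial in
/-- Uniqueness half of Sylvester's theorem. -/
theorem Matrix.eq_zero_of_mul_eq_mul_of_disjoint_spectrum {K ι : Type*} [Field K] [IsAlgClosed K]
    [Fintype ι] [DecidableEq ι] {A B H : Matrix ι ι K}
    (hAB : Disjoint (spectrum K A) (spectrum K B)) (hH : A * H = H * B) : H = 0 := by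
  cases isEmpty_or_nonempty ι
  · exact Subsingleton.elim _ _
  have hunit : IsUnit (aeval B A.charpoly) := by
    have hdeg : 0 < A.charpoly.degree := by
      rw [Matrix.charpoly_degree_eq_dim]
      exact_mod_cast Fintype.card_pos
    rw [← spectrum.zero_notMem_iff K, spectrum.map_polynomial_aeval_of_degree_pos B _ hdeg]
    rintro ⟨μ, hμB, hμA⟩
    exact hAB.notMem_of_mem_right hμB (Matrix.mem_spectrum_iff_isRoot_charpoly.mpr hμA)
  have hannih : H * aeval B A.charpoly = 0 := by
    rw [(SemiconjBy.aeval hH.symm A.charpoly).eq, Matrix.aeval_self_charpoly, zero_mul]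
  exact hunit.mul_left_eq_zero.mp hannih

section QuadraticMatrixEquation

variable {𝕜 A : Type*} [Field 𝕜] [Ring A] [Algebra 𝕜 A]

theorem quadratic_add_eq (a b c : 𝕜) (x y h : A) :
    a • (x * x) + b • (x * (y + h)) + c • ((y + h) * x) =
      (a • (x * x) + b • (x * y) + c • (y * x)) + (b • (x * h) + c • (h * x)) := by
  simp only [mul_add, add_mul, smul_add]
  abel

theorem quadratic_neg_div_smul_self_eq_zero (a : 𝕜) {b c : 𝕜} (x : A) (hbc : b + c ≠ 0) :
    a • (x * x) + b • (x * (-(a / (b + c)) • x)) + c • ((-(a / (b + c)) • x) * x) = 0 := by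
  rw [mul_smul_comm, smul_mul_assoc, smul_smul, smul_smul, add_assoc, ← add_smul, ← add_smul]
  convert zero_smul 𝕜 (x * x)
  field_simp
  ring

theorem eq_neg_div_smul_self_of_commute (a : 𝕜) {b c : 𝕜} (hbc : b + c ≠ 0) {x z : A}
    (hx : IsUnit x) (hxz : Commute x z) (hz : a • (x * x) + b • (x * z) + c • (z * x) = 0) :
    z = -(a / (b + c)) • x := by
  have hfactor : x * (a • x + (b + c) • z) = 0 := by
    rw [← hxz.eq] at hz
    rwa [mul_add, mul_smul_comm, mul_smul_comm, add_smul, ← add_assoc]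
  have hlin : (b + c) • z = -a • x := by
    rw [neg_smul, eq_neg_iff_add_eq_zero, add_comm]
    exact hx.mul_right_eq_zero.mp hfactor
  rw [← inv_smul_smul₀ hbc z, hlin, smul_smul]
  congr 1
  ring

end QuadraticMatrixEquation

/-- Solutions `Y` of `aX₀² + bX₀Y + cYX₀ = 0` for invertible `X₀` and `b + c ≠ 0`:
the unique commuting solution is `-(a/(b+c))X₀`, the solution set is the affine space
of that solution plus solutions of the homogeneous Sylvester equation, and if
`σ(bX₀) ∩ σ(-cX₀) = ∅` then the solution is unique. -/
theorem quadratic_solution_set (n : ℕ) (a b c : ℂ) (hbc : b + c ≠ 0)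
    (X₀ : Mat n) (hX : IsUnit X₀) :
    let Yc : Mat n := (-(a / (b + c))) • X₀
    let 𝒴 : Set (Mat n) := {Y | a • (X₀ * X₀) + b • (X₀ * Y) + c • (Y * X₀) = 0}
    (Yc ∈ 𝒴 ∧ Commute X₀ Yc ∧ ∀ Z ∈ 𝒴, Commute X₀ Z → Z = Yc) ∧
    𝒴 = {Z | ∃ H : Mat n, b • (X₀ * H) + c • (H * X₀) = 0 ∧ Z = Yc + H} ∧
    (spectrum ℂ (b • X₀) ∩ spectrum ℂ ((-c) • X₀) = ∅ → 𝒴 = {Yc}) := by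
  intro Yc 𝒴
  have hYc : Yc ∈ 𝒴 := quadratic_neg_div_smul_self_eq_zero a X₀ hbc
  have hset : 𝒴 = {Z | ∃ H : Mat n, b • (X₀ * H) + c • (H * X₀) = 0 ∧ Z = Yc + H} := by
    ext Y
    constructor
    · intro hY
      refine ⟨Y - Yc, ?_, (add_sub_cancel Yc Y).symm⟩
      have := quadratic_add_eq a b c X₀ Yc (Y - Yc)
      rwa [add_sub_cancel, hY, hYc, zero_add, eq_comm] at this
    · rintro ⟨H, hH, rfl⟩
      change _ = _
      rw [quadratic_add_eq, hYc, hH, add_zero]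
  refine ⟨⟨hYc, (Commute.refl X₀).smul_right _, fun Z hZ hXZ ↦
    eq_neg_div_smul_self_of_commute a hbc hX hXZ hZ⟩, hset, fun hσ ↦ ?_⟩
  rw [hset, Set.eq_singleton_iff_unique_mem]
  refine ⟨⟨0, by simp, (add_zero Yc).symm⟩, ?_⟩
  rintro _ ⟨H, hH, rfl⟩
  have hsylv : (b • X₀) * H = H * ((-c) • X₀) := by
    rw [smul_mul_assoc, mul_smul_comm, neg_smul, ← eq_neg_iff_add_eq_zero.mpr hH]
  rw [Matrix.eq_zero_of_mul_eq_mul_of_disjoint_spectrum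
    (Set.disjoint_iff_inter_eq_empty.mpr hσ) hsylv, add_zero]
end

section
/- Let U ⊆ M^d be an nc domain and f a fine holomorphic function on U. Suppose a ∈ U ∩ M_n^d and h ∈ M_n^d are such that the d-tuple of 2n×2n block matrices x with x_r = [[a_r, h_r],[0, a_r]] lies in U ∩ M_{2n}^d. Then the derivative Df(a)[h] = lim_{t→0} (f(a+th) − f(a))/t exists and f(x) = [[f(a), Df(a)[h]],[0, f(a)]] as a 2n×2n block matrix. -/
open Matrix Filter Topology
open scoped Matrix.Norms.L2Operator Kronecker

/-!
Conjugating `[[a, h], [0, a]]` by `diag(1, t)` gives `[[a, t h], [0, a]]`, so if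
`f([[a, h], [0, a]]) = [[P, Q], [R, S]]` then `f([[a, t h], [0, a]]) = [[P, t Q], [t⁻¹ R, S]]`;
letting `t → 0` and using continuity of `f` at `a ⊕ a` forces `P = S = f(a)` and `R = 0`.
Conjugating `(a + t h) ⊕ a` by `[[1, t⁻¹], [0, 1]]` gives `[[a + t h, h], [0, a]]`, where the
upper right block of `f` is the difference quotient `t⁻¹ (f(a + t h) - f(a))`; continuity at
`[[a, h], [0, a]]` makes it converge to `Q`.

Continuity comes from local boundedness by the same trick: the upper right block of `f` at
`[[b, μ (b - w)], [0, w]]` is `μ (f(b) - f(w))`, which stays bounded independently of `μ` as soon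
as `b` is close enough (depending on `μ`) to `w`.
-/

section BlockMatrix

variable {n m : ℕ}

theorem blk_mul (A : Mat n) (B : Matrix (Fin n) (Fin m) ℂ) (C : Matrix (Fin m) (Fin n) ℂ)
    (D : Mat m) (A' : Mat n) (B' : Matrix (Fin n) (Fin m) ℂ) (C' : Matrix (Fin m) (Fin n) ℂ)
    (D' : Mat m) :
    blk A B C D * blk A' B' C' D' =
      blk (A * A' + B * C') (A * B' + B * D') (C * A' + D * C') (C * B' + D * D') := by
  simp only [blk, reindex_apply, submatrix_mul_equiv, fromBlocks_multiply]

theorem blk_one : (blk 1 0 0 1 : Mat (n + m)) = 1 := by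
  simp [blk, fromBlocks_one]

theorem blk_surjective (M : Mat (n + m)) : ∃ A B C D, M = blk A B C D := by
  let N := reindex finSumFinEquiv.symm finSumFinEquiv.symm M
  exact ⟨N.toBlocks₁₁, N.toBlocks₁₂, N.toBlocks₂₁, N.toBlocks₂₂,
    by simp [N, blk, fromBlocks_toBlocks]⟩

theorem Continuous.blk {X : Type*} [TopologicalSpace X] {A : X → Mat n}
    {B : X → Matrix (Fin n) (Fin m) ℂ} {C : X → Matrix (Fin m) (Fin n) ℂ} {D : X → Mat m}
    (hA : Continuous A) (hB : Continuous B) (hC : Continuous C) (hD : Continuous D) :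
    Continuous fun x => _root_.blk (A x) (B x) (C x) (D x) :=
  (hA.matrix_fromBlocks hB hC hD).matrix_reindex _ _

theorem tendsto_blk_iff {X : Type*} {l : Filter X} {A : X → Mat n}
    {B : X → Matrix (Fin n) (Fin m) ℂ} {C : X → Matrix (Fin m) (Fin n) ℂ} {D : X → Mat m}
    {A₀ : Mat n} {B₀ : Matrix (Fin n) (Fin m) ℂ} {C₀ : Matrix (Fin m) (Fin n) ℂ} {D₀ : Mat m} :
    Tendsto (fun x => blk (A x) (B x) (C x) (D x)) l (𝓝 (blk A₀ B₀ C₀ D₀)) ↔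
      Tendsto A l (𝓝 A₀) ∧ Tendsto B l (𝓝 B₀) ∧ Tendsto C l (𝓝 C₀) ∧ Tendsto D l (𝓝 D₀) := by
  refine ⟨fun h => ?_, fun ⟨hA, hB, hC, hD⟩ => ?_⟩
  · have hsub : ∀ {p q : ℕ} (e₁ : Fin p → Fin (n + m)) (e₂ : Fin q → Fin (n + m)),
        Tendsto (fun x => (blk (A x) (B x) (C x) (D x)).submatrix e₁ e₂) l
          (𝓝 ((blk A₀ B₀ C₀ D₀).submatrix e₁ e₂)) := fun e₁ e₂ =>
      ((continuous_id.matrix_submatrix e₁ e₂).tendsto _).comp h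
    refine ⟨?_, ?_, ?_, ?_⟩ <;>
    [convert hsub (finSumFinEquiv ∘ Sum.inl) (finSumFinEquiv ∘ Sum.inl);
     convert hsub (finSumFinEquiv ∘ Sum.inl) (finSumFinEquiv ∘ Sum.inr);
     convert hsub (finSumFinEquiv ∘ Sum.inr) (finSumFinEquiv ∘ Sum.inl);
     convert hsub (finSumFinEquiv ∘ Sum.inr) (finSumFinEquiv ∘ Sum.inr)] <;>
    ext <;> simp [blk]
  · have hblk : Continuous fun M : Mat n × Matrix (Fin n) (Fin m) ℂ ×
        Matrix (Fin m) (Fin n) ℂ × Mat m => blk M.1 M.2.1 M.2.2.1 M.2.2.2 :=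
      continuous_fst.blk continuous_snd.fst continuous_snd.snd.fst continuous_snd.snd.snd
    exact (hblk.tendsto (A₀, B₀, C₀, D₀)).comp
      (hA.prodMk_nhds (hB.prodMk_nhds (hC.prodMk_nhds hD)))

theorem exists_norm_le_mul_norm_blk :
    ∃ c : ℝ, 0 ≤ c ∧ ∀ (A : Mat n) (B : Matrix (Fin n) (Fin m) ℂ)
      (C : Matrix (Fin m) (Fin n) ℂ) (D : Mat m), ‖B‖ ≤ c * ‖blk A B C D‖ := by
  let upperRight : Mat (n + m) →ₗ[ℂ] Matrix (Fin n) (Fin m) ℂ :=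
    { toFun := fun M => M.submatrix (finSumFinEquiv ∘ Sum.inl) (finSumFinEquiv ∘ Sum.inr)
      map_add' := fun _ _ => rfl
      map_smul' := fun _ _ => rfl }
  let L := LinearMap.toContinuousLinearMap upperRight
  refine ⟨‖L‖, norm_nonneg L, fun A B C D => ?_⟩
  calc ‖B‖ = ‖L (blk A B C D)‖ := by
        congr 1
        change B = (blk A B C D).submatrix _ _
        ext; simp [blk]
    _ ≤ ‖L‖ * ‖blk A B C D‖ := L.le_opNorm _

theorem blk_unipotent_mul_neg (γ : Matrix (Fin n) (Fin m) ℂ) :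
    blk 1 γ 0 1 * blk 1 (-γ) 0 1 = (1 : Mat (n + m)) := by
  simp [blk_mul, blk_one]

theorem blk_unipotent_conj (γ : Matrix (Fin n) (Fin m) ℂ) (b : Mat n) (c : Mat m) :
    blk 1 (-γ) 0 1 * blk b 0 0 c * blk 1 γ 0 1 = blk b (b * γ - γ * c) 0 c := by
  simp [blk_mul, sub_eq_add_neg]

theorem blk_diag_smul_mul_inv {t : ℂ} (ht : t ≠ 0) :
    blk 1 0 0 (t • 1) * blk 1 0 0 (t⁻¹ • 1) = (1 : Mat (n + m)) := by
  simp [blk_mul, smul_smul, ht, blk_one]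

theorem blk_diag_smul_conj {t : ℂ} (ht : t ≠ 0) (A : Mat n) (B : Matrix (Fin n) (Fin m) ℂ)
    (C : Matrix (Fin m) (Fin n) ℂ) (D : Mat m) :
    blk 1 0 0 (t⁻¹ • 1) * blk A B C D * blk 1 0 0 (t • 1) = blk A (t • B) (t⁻¹ • C) D := by
  simp [blk_mul, smul_smul, ht]

end BlockMatrix

section NCFunction

variable {d : ℕ} {Ω U : Set (MSpace d)} {f : ∀ n, MatTup d n → Mat n}

theorem IsNCDomain.eventually_mem (hΩ : IsNCDomain Ω) {m : ℕ} {w : MatTup d m}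
    (hw : (⟨m, w⟩ : MSpace d) ∈ Ω) : ∀ᶠ x in 𝓝 w, (⟨m, x⟩ : MSpace d) ∈ Ω :=
  (hΩ.duOpen m).mem_nhds hw

theorem FineOpen.eventually_mem (hU : FineOpen U) {m : ℕ} {w : MatTup d m}
    (hw : (⟨m, w⟩ : MSpace d) ∈ U) : ∀ᶠ x in 𝓝 w, (⟨m, x⟩ : MSpace d) ∈ U := by
  obtain ⟨Ω, hΩ, hwΩ, hΩU⟩ := hU _ hw
  exact (hΩ.eventually_mem hwΩ).mono fun _ hx => hΩU hx

theorem IsNCFunctionOn.mono (hf : IsNCFunctionOn U f) (hΩU : Ω ⊆ U) : IsNCFunctionOn Ω f where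
  dsum_eq x y hx hy hxy := hf.dsum_eq x y (hΩU hx) (hΩU hy) (hΩU hxy)
  sim_eq s x hs hx hsx := hf.sim_eq s x hs (hΩU hx) (hΩU hsx)

theorem IsNCFunctionOn.map_conj (hf : IsNCFunctionOn Ω f) {n : ℕ} {s s' : Mat n}
    (hs : s * s' = 1) {x : MatTup d n} (hx : (⟨n, x⟩ : MSpace d) ∈ Ω)
    (hsx : (⟨n, fun r => s' * x r * s⟩ : MSpace d) ∈ Ω) :
    f n (fun r => s' * x r * s) = s' * f n x * s := by
  have hinv : s⁻¹ = s' := inv_eq_right_inv hs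
  have h := hf.sim_eq s x (IsUnit.of_mul_eq_one s' hs) hx (by unfold simConj; rwa [hinv])
  unfold simConj at h
  rwa [hinv] at h

theorem IsNCFunctionOn.map_blk_triangular (hf : IsNCFunctionOn Ω f) {n m : ℕ}
    (γ : Matrix (Fin n) (Fin m) ℂ) {b : MatTup d n} {c : MatTup d m}
    (hb : (⟨n, b⟩ : MSpace d) ∈ Ω) (hc : (⟨m, c⟩ : MSpace d) ∈ Ω)
    (hbc : (⟨n + m, dSum b c⟩ : MSpace d) ∈ Ω)
    (hT : (⟨n + m, fun r => blk (b r) (b r * γ - γ * c r) 0 (c r)⟩ : MSpace d) ∈ Ω) :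
    f (n + m) (fun r => blk (b r) (b r * γ - γ * c r) 0 (c r)) =
      blk (f n b) (f n b * γ - γ * f m c) 0 (f m c) := by
  have hconj : (fun r => blk (b r) (b r * γ - γ * c r) 0 (c r)) =
      fun r => blk 1 (-γ) 0 1 * dSum b c r * blk 1 γ 0 1 := by
    funext r
    rw [dSum, blk_unipotent_conj]
  rw [hconj] at hT ⊢
  rw [hf.map_conj (blk_unipotent_mul_neg γ) hbc hT, hf.dsum_eq b c hb hc hbc,
    blk_unipotent_conj]

theorem IsNCFunctionOn.map_blk_smul (hf : IsNCFunctionOn Ω f) {n m : ℕ} {t : ℂ} (ht : t ≠ 0)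
    {A : MatTup d n} {B : Fin d → Matrix (Fin n) (Fin m) ℂ}
    {C : Fin d → Matrix (Fin m) (Fin n) ℂ} {D : MatTup d m}
    (hx : (⟨n + m, fun r => blk (A r) (B r) (C r) (D r)⟩ : MSpace d) ∈ Ω)
    (htx : (⟨n + m, fun r => blk (A r) (t • B r) (t⁻¹ • C r) (D r)⟩ : MSpace d) ∈ Ω)
    {P : Mat n} {Q : Matrix (Fin n) (Fin m) ℂ} {R : Matrix (Fin m) (Fin n) ℂ} {S : Mat m}
    (hfx : f (n + m) (fun r => blk (A r) (B r) (C r) (D r)) = blk P Q R S) :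
    f (n + m) (fun r => blk (A r) (t • B r) (t⁻¹ • C r) (D r)) =
      blk P (t • Q) (t⁻¹ • R) S := by
  simp only [← blk_diag_smul_conj ht] at htx ⊢
  rw [hf.map_conj (blk_diag_smul_mul_inv ht) hx htx, hfx, blk_diag_smul_conj ht]

theorem IsNCFunctionOn.continuousAt_of_norm_le (hΩ : IsNCDomain Ω) (hf : IsNCFunctionOn Ω f)
    {C : ℝ} (hC : ∀ x ∈ Ω, ‖f x.1 x.2‖ ≤ C) {m : ℕ} {w : MatTup d m}
    (hw : (⟨m, w⟩ : MSpace d) ∈ Ω) : ContinuousAt (f m) w := by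
  obtain ⟨c, hc0, hc⟩ := exists_norm_le_mul_norm_blk (n := m) (m := m)
  have hC0 : 0 ≤ C := (norm_nonneg _).trans (hC _ hw)
  rw [ContinuousAt, Metric.tendsto_nhds]
  intro ε hε
  set μ : ℝ := (c * C + 1) / ε with hμ
  let T : MatTup d m → MatTup d (m + m) := fun b r =>
    blk (b r) (b r * ((μ : ℂ) • 1) - ((μ : ℂ) • 1) * w r) 0 (w r)
  have hT : Tendsto T (𝓝 w) (𝓝 (dSum w w)) := by
    have hcont : Continuous T := by
      refine continuous_pi fun r => Continuous.blk (continuous_apply r) ?_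
        continuous_const continuous_const
      exact ((continuous_apply r).mul continuous_const).sub continuous_const
    convert hcont.tendsto w using 2
    funext r
    simp [T, dSum]
  filter_upwards [hΩ.eventually_mem hw,
    hT.eventually (hΩ.eventually_mem (hΩ.dsum_mem w w hw hw))] with b hb hTb
  have hfT := hf.map_blk_triangular ((μ : ℂ) • 1) hb hw (hΩ.dsum_mem b w hb hw) hTb
  have hbound : μ * ‖f m b - f m w‖ ≤ c * C := by
    calc μ * ‖f m b - f m w‖ = ‖f m b * ((μ : ℂ) • 1) - ((μ : ℂ) • 1) * f m w‖ := by
          rw [mul_smul_one, smul_one_mul, ← smul_sub, norm_smul, Complex.norm_real,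
            Real.norm_of_nonneg (by positivity)]
      _ ≤ c * ‖f (m + m) (T b)‖ := hfT ▸ hc _ _ _ _
      _ ≤ c * C := mul_le_mul_of_nonneg_left (hC _ hTb) hc0
  rw [dist_eq_norm]
  rw [hμ, div_mul_eq_mul_div, div_le_iff₀ hε] at hbound
  by_contra! hge
  nlinarith [mul_le_mul_of_nonneg_left hge (by positivity : (0 : ℝ) ≤ c * C + 1)]

theorem IsFineHolo.continuousAt (hf : IsFineHolo U f) {m : ℕ} {w : MatTup d m}
    (hw : (⟨m, w⟩ : MSpace d) ∈ U) : ContinuousAt (f m) w := by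
  obtain ⟨Ω, hΩ, hwΩ, hΩU, C, hC⟩ := hf.2.2 _ hw
  exact (hf.2.1.mono hΩU).continuousAt_of_norm_le hΩ hC hwΩ

end NCFunction

section UpperTriangular

variable {d n : ℕ} {U : Set (MSpace d)} {f : ∀ n, MatTup d n → Mat n} {a h : MatTup d n}

theorem IsFineHolo.exists_apply_blk_eq (hf : IsFineHolo U f) (ha : (⟨n, a⟩ : MSpace d) ∈ U)
    (hx : (⟨n + n, fun r => blk (a r) (h r) 0 (a r)⟩ : MSpace d) ∈ U) :
    ∃ Q, f (n + n) (fun r => blk (a r) (h r) 0 (a r)) = blk (f n a) Q 0 (f n a) := by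
  obtain ⟨Ω, hΩ, haΩ, hΩU⟩ := hf.1 _ ha
  have haa : (⟨n + n, dSum a a⟩ : MSpace d) ∈ Ω := hΩ.dsum_mem a a haΩ haΩ
  obtain ⟨P, Q, R, S, hPQRS⟩ := blk_surjective (f (n + n) fun r => blk (a r) (h r) 0 (a r))
  let X : ℂ → MatTup d (n + n) := fun t r => blk (a r) (t • h r) 0 (a r)
  have hX : Tendsto X (𝓝 0) (𝓝 (dSum a a)) := by
    have hcont : Continuous X := continuous_pi fun r =>
      continuous_const.blk (continuous_id.smul continuous_const) continuous_const continuous_const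
    convert hcont.tendsto 0 using 2
    funext r
    simp [X, dSum]
  have hfX : Tendsto (fun t => f (n + n) (X t)) (𝓝[≠] 0) (𝓝 (blk (f n a) 0 0 (f n a))) := by
    rw [← hf.2.1.dsum_eq a a ha ha (hΩU haa)]
    exact ((hf.continuousAt (hΩU haa)).tendsto.comp hX).mono_left nhdsWithin_le_nhds
  have hfX_eq : ∀ᶠ t in 𝓝[≠] 0, f (n + n) (X t) = blk P (t • Q) (t⁻¹ • R) S := by
    filter_upwards [self_mem_nhdsWithin,
      nhdsWithin_le_nhds (hX.eventually (hΩ.eventually_mem haa))] with t ht htX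
    have key := hf.2.1.map_blk_smul (C := fun _ => 0) ht hx
      (by simpa only [smul_zero] using hΩU htX) hPQRS
    simpa only [smul_zero] using key
  obtain ⟨hP, -, hR, hS⟩ := tendsto_blk_iff.1 (hfX.congr' hfX_eq)
  have hR0 : R = 0 := by
    have hlim : Tendsto (fun t : ℂ => t • t⁻¹ • R) (𝓝[≠] 0) (𝓝 0) := by
      simpa using (tendsto_nhdsWithin_of_tendsto_nhds tendsto_id).smul hR
    refine tendsto_nhds_unique (tendsto_const_nhds.congr' ?_) hlim
    filter_upwards [self_mem_nhdsWithin] with t ht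
    rw [smul_smul, mul_inv_cancel₀ ht, one_smul]
  refine ⟨Q, ?_⟩
  rw [hPQRS, tendsto_nhds_unique tendsto_const_nhds hP,
    tendsto_nhds_unique tendsto_const_nhds hS, hR0]

theorem IsFineHolo.tendsto_slope (hf : IsFineHolo U f) (ha : (⟨n, a⟩ : MSpace d) ∈ U)
    (hx : (⟨n + n, fun r => blk (a r) (h r) 0 (a r)⟩ : MSpace d) ∈ U) {Q : Mat n}
    (hQ : f (n + n) (fun r => blk (a r) (h r) 0 (a r)) = blk (f n a) Q 0 (f n a)) :
    Tendsto (fun t : ℂ => t⁻¹ • (f n (a + t • h) - f n a)) (𝓝[≠] 0) (𝓝 Q) := by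
  obtain ⟨Ω, hΩ, haΩ, hΩU⟩ := hf.1 _ ha
  have hath : Tendsto (fun t : ℂ => a + t • h) (𝓝 0) (𝓝 a) := by
    simpa using (show Continuous fun t : ℂ => a + t • h by fun_prop).tendsto 0
  let T : ℂ → MatTup d (n + n) := fun t r => blk ((a + t • h) r) (h r) 0 (a r)
  have hT : Tendsto T (𝓝 0) (𝓝 fun r => blk (a r) (h r) 0 (a r)) := by
    have hcont : Continuous T := continuous_pi fun r =>
      (show Continuous fun t : ℂ => (a + t • h) r by fun_prop).blk
        continuous_const continuous_const continuous_const
    simpa [T] using hcont.tendsto 0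
  have hfT : Tendsto (fun t => f (n + n) (T t)) (𝓝[≠] 0) (𝓝 (blk (f n a) Q 0 (f n a))) :=
    hQ ▸ ((hf.continuousAt hx).tendsto.comp hT).mono_left nhdsWithin_le_nhds
  have hfT_eq : ∀ᶠ t in 𝓝[≠] 0, f (n + n) (T t) =
      blk (f n (a + t • h)) (t⁻¹ • (f n (a + t • h) - f n a)) 0 (f n a) := by
    filter_upwards [self_mem_nhdsWithin,
      nhdsWithin_le_nhds (hath.eventually (hΩ.eventually_mem haΩ)),
      nhdsWithin_le_nhds (hT.eventually (hf.1.eventually_mem hx))] with t ht hat hTt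
    have ht : t ≠ 0 := ht
    have hγ : ∀ r, (a + t • h) r * (t⁻¹ • 1) - (t⁻¹ • 1) * a r = h r := fun r => by
      simp [smul_smul, inv_mul_cancel₀ ht]
    have key := hf.2.1.map_blk_triangular (t⁻¹ • 1) (hΩU hat) ha
      (hΩU (hΩ.dsum_mem _ _ hat haΩ)) (by simpa only [hγ] using hTt)
    simp only [hγ] at key
    rw [key, mul_smul_one, smul_one_mul, smul_sub]
  exact (tendsto_blk_iff.1 (hfT.congr' hfT_eq)).2.1

end UpperTriangular

theorem fine_holo_block_formula_general (d n : ℕ) (U : Set (MSpace d))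
    (f : ∀ m, MatTup d m → Mat m) (hf : IsFineHolo U f)
    (a h : MatTup d n) (ha : (⟨n, a⟩ : MSpace d) ∈ U)
    (hx : (⟨n + n, fun r => blk (a r) (h r) 0 (a r)⟩ : MSpace d) ∈ U) :
    ∃ D : Mat n,
      Tendsto (fun t : ℂ => t⁻¹ • (f n (a + t • h) - f n a)) (𝓝[≠] 0) (𝓝 D) ∧
      f (n + n) (fun r => blk (a r) (h r) 0 (a r)) = blk (f n a) D 0 (f n a) := by
  obtain ⟨D, hD⟩ := hf.exists_apply_blk_eq ha hx
  exact ⟨D, hf.tendsto_slope ha hx hD, hD⟩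

/-- If `f` is fine holomorphic on an nc domain `U`, `a ∈ U ∩ M_n^d`, and the upper
triangular point `[[a,h],[0,a]]` lies in `U`, then the derivative `Df(a)[h]` exists and
`f([[a,h],[0,a]]) = [[f(a), Df(a)[h]],[0, f(a)]]`. -/
theorem fine_holo_block_formula (d n : ℕ) (U : Set (MSpace d)) (hU : IsNCDomain U)
    (f : ∀ m, MatTup d m → Mat m) (hf : IsFineHolo U f)
    (a h : MatTup d n) (ha : (⟨n, a⟩ : MSpace d) ∈ U)
    (hx : (⟨n + n, fun r => blk (a r) (h r) 0 (a r)⟩ : MSpace d) ∈ U) :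
    ∃ D : Mat n,
      Tendsto (fun t : ℂ => t⁻¹ • (f n (a + t • h) - f n a)) (𝓝[≠] 0) (𝓝 D) ∧
      f (n + n) (fun r => blk (a r) (h r) 0 (a r)) = blk (f n a) D 0 (f n a) :=
  fine_holo_block_formula_general d n U f hf a h ha hx
end
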